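/- For the rank-one Dunkl operator T_k f(x) = f'(x) + k·(f(x) − f(−x))/x with parameter k ≥ 0, and for any y ∈ ℝ, the function x ↦ E_k(x, y) (the rank-one Dunkl kernel, defined via E_k(x,y) = (Γ(k+1/2)/(Γ(1/2)Γ(k))) ∫_{−1}^{1} e^{xyt}(1−t)^{k−1}(1+t)^{k} dt for k > 0) satisfies T_k E_k(·, y)(x) = y · E_k(x, y) for all x ≠ 0. -/

import Mathlib

/-!
Write `L_{p,q}(s) = ∫_{-1}^{1} e^{st} (1-t)^p (1+t)^q dt`, so that `E_k(x,y) = c_k L_{k-1,k}(xy)`.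
Differentiating under the integral and using `t = 1 - (1-t)` gives
`L_{k-1,k}' = L_{k-1,k} - L_{k,k}`, while the substitution `t ↦ -t` and an integration by parts
against `(1-t)^k (1+t)^k`, which vanishes at `±1`, give
`k (L_{k-1,k}(s) - L_{k-1,k}(-s)) = s L_{k,k}(s)`. The two `L_{k,k}` terms cancel in `T_k`.
-/

open MeasureTheory

/-- The rank-one Dunkl operator `T_k f(x) = f'(x) + k (f(x) - f(-x))/x`. -/
noncomputable def dunklT (k : ℝ) (f : ℝ → ℝ) (x : ℝ) : ℝ :=
  deriv f x + k * (f x - f (-x)) / x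

/-- The rank-one Dunkl kernel for `k > 0`. -/
noncomputable def dunklE (k x y : ℝ) : ℝ :=
  (Real.Gamma (k + 1/2) / (Real.Gamma (1/2) * Real.Gamma k)) *
    ∫ t in (-1:ℝ)..1, Real.exp (x * y * t) * (1 - t) ^ (k - 1) * (1 + t) ^ k

open Real Set intervalIntegral
open scoped Interval

theorem intervalIntegrable_mul_one_sub_rpow_mul_one_add_rpow {h : ℝ → ℝ}
    (hh : ContinuousOn h [[-1, 1]]) {p q : ℝ} (hp : -1 < p) (hq : -1 < q) :
    IntervalIntegrable (fun t => h t * (1 - t) ^ p * (1 + t) ^ q) volume (-1) 1 := by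
  have left : IntervalIntegrable (fun t : ℝ => (1 + t) ^ q) volume (-1) 0 := by
    simpa using (intervalIntegrable_rpow' (a := 0) (b := 1) hq).comp_add_left 1
  have right : IntervalIntegrable (fun t : ℝ => (1 - t) ^ p) volume 0 1 := by
    simpa using ((intervalIntegrable_rpow' (a := 0) (b := 1) hp).comp_sub_left 1).symm
  refine IntervalIntegrable.trans (b := 0) ?_ ?_
  · have hcont : ContinuousOn (fun t => h t * (1 - t) ^ p) [[-1, 0]] :=
      (hh.mono (uIcc_subset_uIcc_left (by simp))).mul <|
        ContinuousOn.rpow_const (f := fun t => 1 - t) (by fun_prop) fun t ht => by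
          left; rw [uIcc_of_le (by norm_num)] at ht; linarith [ht.2]
    exact left.continuousOn_mul hcont
  · have hcont : ContinuousOn (fun t => h t * (1 + t) ^ q) [[0, 1]] :=
      (hh.mono (uIcc_subset_uIcc_right (by simp))).mul <|
        ContinuousOn.rpow_const (f := fun t => 1 + t) (by fun_prop) fun t ht => by
          left; rw [uIcc_of_le (by norm_num)] at ht; linarith [ht.1]
    convert right.continuousOn_mul hcont using 1
    ext t; ring

theorem hasDerivAt_integral_exp_mul {a b : ℝ} {g : ℝ → ℝ} (hg : IntervalIntegrable g volume a b)
    (s : ℝ) :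
    HasDerivAt (fun s => ∫ t in a..b, exp (s * t) * g t)
      (∫ t in a..b, t * exp (s * t) * g t) s := by
  set M := |a| + |b|
  have hM : ∀ t ∈ Ι a b, |t| ≤ M := fun t ht => by
    rcases mem_uIcc.mp (uIoc_subset_uIcc ht) with h | h <;>
      exact abs_le.mpr ⟨by linarith [neg_abs_le a, neg_abs_le b, abs_nonneg a, abs_nonneg b],
        by linarith [le_abs_self a, le_abs_self b, abs_nonneg a, abs_nonneg b]⟩
  have hexp : ∀ s' : ℝ, Continuous fun t => exp (s' * t) := by fun_prop
  refine (hasDerivAt_integral_of_dominated_loc_of_deriv_le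
    (F := fun s t => exp (s * t) * g t) (F' := fun s t => t * exp (s * t) * g t)
    (bound := fun t => M * exp ((|s| + 1) * M) * |g t|)
    (Metric.ball_mem_nhds s one_pos) ?_ (hg.continuousOn_mul (hexp s).continuousOn) ?_ ?_ ?_ ?_).2
  · exact Filter.Eventually.of_forall fun s' =>
      (hexp s').aestronglyMeasurable.mul hg.def'.aestronglyMeasurable
  · exact ((continuous_id.mul (hexp s)).aestronglyMeasurable).mul hg.def'.aestronglyMeasurable
  · refine Filter.Eventually.of_forall fun t ht s' hs' => ?_
    have hs'M : |s'| ≤ |s| + 1 := by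
      have := abs_sub_abs_le_abs_sub s' s
      rw [Metric.mem_ball, dist_eq] at hs'
      linarith
    have htM := hM t ht
    have hexp_le : exp (s' * t) ≤ exp ((|s| + 1) * M) :=
      exp_le_exp.mpr <| (le_abs_self _).trans <| (abs_mul s' t).trans_le <|
        mul_le_mul hs'M htM (abs_nonneg _) (by positivity)
    rw [norm_mul, norm_mul, norm_eq_abs, norm_eq_abs, norm_eq_abs, abs_exp]
    gcongr
  · exact hg.norm.const_mul _
  · refine Filter.Eventually.of_forall fun t _ s' _ => ?_
    simpa [mul_comm] using ((hasDerivAt_id s').mul_const t).exp.mul_const (g t)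

noncomputable def jacobiWeightLaplace (p q s : ℝ) : ℝ :=
  ∫ t in (-1:ℝ)..1, exp (s * t) * (1 - t) ^ p * (1 + t) ^ q

theorem intervalIntegrable_exp_mul_jacobiWeight {p q : ℝ} (hp : -1 < p) (hq : -1 < q) (s : ℝ) :
    IntervalIntegrable (fun t => exp (s * t) * (1 - t) ^ p * (1 + t) ^ q) volume (-1) 1 :=
  intervalIntegrable_mul_one_sub_rpow_mul_one_add_rpow (by fun_prop) hp hq

theorem jacobiWeightLaplace_neg (p q s : ℝ) :
    jacobiWeightLaplace p q (-s) = jacobiWeightLaplace q p s := by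
  rw [jacobiWeightLaplace, ← neg_neg (1 : ℝ), ← integral_comp_neg]
  simp only [neg_neg, jacobiWeightLaplace]
  congr 1; ext t; ring_nf

theorem hasDerivAt_jacobiWeightLaplace {p q : ℝ} (hp : -1 < p) (hq : -1 < q) (s : ℝ) :
    HasDerivAt (jacobiWeightLaplace p q)
      (jacobiWeightLaplace p q s - jacobiWeightLaplace (p + 1) q s) s := by
  have hg : IntervalIntegrable (fun t : ℝ => (1 - t) ^ p * (1 + t) ^ q) volume (-1) 1 := by
    simpa using intervalIntegrable_mul_one_sub_rpow_mul_one_add_rpow (h := fun _ => 1)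
      continuousOn_const hp hq
  have hderiv := hasDerivAt_integral_exp_mul hg s
  simp only [← mul_assoc] at hderiv
  refine HasDerivAt.congr_deriv (f := jacobiWeightLaplace p q) hderiv ?_
  rw [jacobiWeightLaplace, jacobiWeightLaplace, ← integral_sub
    (intervalIntegrable_exp_mul_jacobiWeight hp hq s)
    (intervalIntegrable_exp_mul_jacobiWeight (by linarith) hq s)]
  refine integral_congr fun t ht => ?_
  rw [uIcc_of_le (by norm_num)] at ht
  simp only [rpow_add_one' (sub_nonneg.mpr ht.2) (by linarith : p + 1 ≠ 0)]
  ring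

theorem jacobiWeightLaplace_integral_by_parts {a b : ℝ} (ha : 0 < a) (hb : 0 < b) (s : ℝ) :
    b * jacobiWeightLaplace a (b - 1) s - a * jacobiWeightLaplace (a - 1) b s =
      -(s * jacobiWeightLaplace a b s) := by
  have hv : ∀ t ∈ Ioo (min (-1 : ℝ) 1) (max (-1) 1),
      HasDerivAt (fun t => (1 - t) ^ a * (1 + t) ^ b)
        (-a * (1 - t) ^ (a - 1) * (1 + t) ^ b + b * (1 - t) ^ a * (1 + t) ^ (b - 1)) t := by
    intro t ht
    rw [min_eq_left (by norm_num), max_eq_right (by norm_num), mem_Ioo] at ht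
    have h1 := ((hasDerivAt_id' t).const_sub 1).rpow_const (p := a)
      (Or.inl (ne_of_gt (by linarith [ht.2])))
    have h2 := ((hasDerivAt_id' t).const_add 1).rpow_const (p := b)
      (Or.inl (ne_of_gt (by linarith [ht.1])))
    exact (h1.mul h2).congr_deriv (by ring)
  have hv' : IntervalIntegrable (fun t =>
      -a * (1 - t) ^ (a - 1) * (1 + t) ^ b + b * (1 - t) ^ a * (1 + t) ^ (b - 1)) volume (-1) 1 :=
    (intervalIntegrable_mul_one_sub_rpow_mul_one_add_rpow (h := fun _ => -a) continuousOn_const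
      (by linarith) (by linarith)).add
    (intervalIntegrable_mul_one_sub_rpow_mul_one_add_rpow (h := fun _ => b) continuousOn_const
      (by linarith) (by linarith))
  have hibp := integral_mul_deriv_eq_deriv_mul_of_hasDerivAt
    (u := fun t => exp (s * t)) (u' := fun t => s * exp (s * t))
    (v := fun t => (1 - t) ^ a * (1 + t) ^ b) (by fun_prop)
    (ContinuousOn.mul (ContinuousOn.rpow_const (by fun_prop) fun _ _ => Or.inr ha.le)
      (ContinuousOn.rpow_const (by fun_prop) fun _ _ => Or.inr hb.le))
    (fun t _ => by simpa [mul_comm] using ((hasDerivAt_id t).const_mul s).exp) hv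
    ((by fun_prop : Continuous fun t => s * exp (s * t)).intervalIntegrable _ _) hv'
  calc b * jacobiWeightLaplace a (b - 1) s - a * jacobiWeightLaplace (a - 1) b s
      = ∫ t in (-1:ℝ)..1, exp (s * t) *
          (-a * (1 - t) ^ (a - 1) * (1 + t) ^ b + b * (1 - t) ^ a * (1 + t) ^ (b - 1)) := by
        rw [jacobiWeightLaplace, jacobiWeightLaplace, ← intervalIntegral.integral_const_mul,
          ← intervalIntegral.integral_const_mul, ← integral_sub
            ((intervalIntegrable_exp_mul_jacobiWeight (by linarith) (by linarith) s).const_mul b)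
            ((intervalIntegrable_exp_mul_jacobiWeight (by linarith) (by linarith) s).const_mul a)]
        congr with t; ring
    _ = -∫ t in (-1:ℝ)..1, s * exp (s * t) * ((1 - t) ^ a * (1 + t) ^ b) := by
        rw [hibp]; norm_num [zero_rpow ha.ne', zero_rpow hb.ne']
    _ = -(s * jacobiWeightLaplace a b s) := by
        rw [jacobiWeightLaplace, ← intervalIntegral.integral_const_mul]; congr with t; ring

theorem mul_jacobiWeightLaplace_sub_neg {k : ℝ} (hk : 0 < k) (s : ℝ) :
    k * (jacobiWeightLaplace (k - 1) k s - jacobiWeightLaplace (k - 1) k (-s)) =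
      s * jacobiWeightLaplace k k s := by
  rw [jacobiWeightLaplace_neg]
  linear_combination -jacobiWeightLaplace_integral_by_parts hk hk s

theorem dunkl_kernel_eigenfunction (k : ℝ) (hk : 0 < k) (y : ℝ) :
    ∀ x : ℝ, x ≠ 0 → dunklT k (fun x => dunklE k x y) x = y * dunklE k x y := by
  intro x hx
  set c := Real.Gamma (k + 1/2) / (Real.Gamma (1/2) * Real.Gamma k)
  have hE : ∀ x, dunklE k x y = c * jacobiWeightLaplace (k - 1) k (x * y) := fun _ => rfl
  have hL := hasDerivAt_jacobiWeightLaplace (p := k - 1) (q := k) (by linarith) (by linarith)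
    (x * y)
  rw [sub_add_cancel] at hL
  have hderiv : HasDerivAt (fun x => dunklE k x y)
      (c * ((jacobiWeightLaplace (k - 1) k (x * y) - jacobiWeightLaplace k k (x * y)) * y)) x :=
    ((hL.comp x (hasDerivAt_mul_const y)).const_mul c :)
  have hodd : k * (dunklE k x y - dunklE k (-x) y) =
      x * (c * y * jacobiWeightLaplace k k (x * y)) := by
    rw [hE, hE, neg_mul]
    linear_combination c * mul_jacobiWeightLaplace_sub_neg hk (x * y)
  rw [dunklT, hderiv.deriv, hodd, mul_div_cancel_left₀ _ hx, hE]
  ring
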